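/- Let b₁, b₂, α, α₀, τ ∈ ℝ with b₁² + b₂² ≤ 1 and |α − α₀| ≤ d, |b₁ − b₁'| ≤ d, |b₂ − b₂'| ≤ d, where (b₁')² + (b₂')² ≤ 1. Define W(r, φ) = (r cos(αφ) b₂ − r sin(αφ) b₁ − τ)² and W₀(r, φ) = (r cos(α₀φ) b₂' − r sin(α₀φ) b₁' − τ)² for (r, φ) ∈ [0, ∞) × [−1/2, 1/2]. Then there exist constants C₃, C₄ > 0, independent of τ, d, r, φ, such that W(r, φ) ≤ (1 + C₃ d) W₀(r, φ) + C₄ r² d for all (r, φ) with r ≥ 0, |φ| ≤ 1/2. -/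
import Mathlib

lemma pot_aux_unit (c s x y : ℝ) (h : x ^ 2 + y ^ 2 ≤ 1) (hcs : s ^ 2 + c ^ 2 = 1) :
    |c * y - s * x| ≤ 1 := by
  have h1 : (c * y - s * x) ^ 2 ≤ 1 := by nlinarith [sq_nonneg (c * x + s * y)]
  rw [abs_le]
  constructor <;> nlinarith [sq_nonneg (c * y - s * x - 1), sq_nonneg (c * y - s * x + 1)]

lemma pot_cos_lip (x y : ℝ) : |Real.cos x - Real.cos y| ≤ |x - y| := by
  rw [Real.cos_sub_cos, abs_mul, abs_mul, abs_neg]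
  have h1 := Real.abs_sin_le_one ((x + y) / 2)
  have h2 : |Real.sin ((x - y) / 2)| ≤ |x - y| / 2 := by
    have := Real.abs_sin_le_abs (x := (x - y) / 2)
    rwa [abs_div, abs_two] at this
  have h3 : (0:ℝ) ≤ |Real.sin ((x - y) / 2)| := abs_nonneg _
  have h4 : (0:ℝ) ≤ |Real.sin ((x + y) / 2)| := abs_nonneg _
  rw [abs_two]
  nlinarith

lemma pot_sin_lip (x y : ℝ) : |Real.sin x - Real.sin y| ≤ |x - y| := by
  rw [Real.sin_sub_sin, abs_mul, abs_mul]
  have h1 := Real.abs_cos_le_one ((x + y) / 2)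
  have h2 : |Real.sin ((x - y) / 2)| ≤ |x - y| / 2 := by
    have := Real.abs_sin_le_abs (x := (x - y) / 2)
    rwa [abs_div, abs_two] at this
  have h3 : (0:ℝ) ≤ |Real.sin ((x - y) / 2)| := abs_nonneg _
  have h4 : (0:ℝ) ≤ |Real.cos ((x + y) / 2)| := abs_nonneg _
  rw [abs_two]
  nlinarith

theorem potential_perturbation_estimate (b₁ b₂ b₁' b₂' α α₀ : ℝ)
    (hb : b₁ ^ 2 + b₂ ^ 2 ≤ 1) (hb' : b₁' ^ 2 + b₂' ^ 2 ≤ 1) :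
    ∃ C₃ > (0 : ℝ), ∃ C₄ > (0 : ℝ), ∀ τ d r φ : ℝ,
      |α - α₀| ≤ d → |b₁ - b₁'| ≤ d → |b₂ - b₂'| ≤ d →
      0 ≤ r → |φ| ≤ 1 / 2 →
      (r * Real.cos (α * φ) * b₂ - r * Real.sin (α * φ) * b₁ - τ) ^ 2 ≤
        (1 + C₃ * d) *
          (r * Real.cos (α₀ * φ) * b₂' - r * Real.sin (α₀ * φ) * b₁' - τ) ^ 2 +
          C₄ * r ^ 2 * d := by
  refine ⟨1, one_pos, 15, by norm_num, ?_⟩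
  intro τ d r φ hα h1 h2 hr hφ
  have hd : 0 ≤ d := le_trans (abs_nonneg _) hα
  set A := r * Real.cos (α * φ) * b₂ - r * Real.sin (α * φ) * b₁ - τ with hA
  set B := r * Real.cos (α₀ * φ) * b₂' - r * Real.sin (α₀ * φ) * b₁' - τ with hB
  -- |b| bounds
  have hb1 : |b₁| ≤ 1 := by rw [abs_le]; constructor <;> nlinarith [sq_nonneg b₂]
  have hb2 : |b₂| ≤ 1 := by rw [abs_le]; constructor <;> nlinarith [sq_nonneg b₁]
  have hb1' : |b₁'| ≤ 1 := by rw [abs_le]; constructor <;> nlinarith [sq_nonneg b₂']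
  have hb2' : |b₂'| ≤ 1 := by rw [abs_le]; constructor <;> nlinarith [sq_nonneg b₁']
  -- Lipschitz bounds
  have hφα : |α * φ - α₀ * φ| ≤ d / 2 := by
    rw [← sub_mul, abs_mul]
    calc |α - α₀| * |φ| ≤ d * (1 / 2) :=
          mul_le_mul hα hφ (abs_nonneg _) hd
      _ = d / 2 := by ring
  have hcos : |Real.cos (α * φ) - Real.cos (α₀ * φ)| ≤ d / 2 := by
    exact le_trans (pot_cos_lip _ _) hφα
  have hsin : |Real.sin (α * φ) - Real.sin (α₀ * φ)| ≤ d / 2 := by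
    exact le_trans (pot_sin_lip _ _) hφα
  -- combined bilinear bounds
  have hcb : |Real.cos (α * φ) * b₂ - Real.cos (α₀ * φ) * b₂'| ≤ 3 * d / 2 := by
    have hrw : Real.cos (α * φ) * b₂ - Real.cos (α₀ * φ) * b₂'
        = Real.cos (α * φ) * (b₂ - b₂') + (Real.cos (α * φ) - Real.cos (α₀ * φ)) * b₂' := by
      ring
    rw [hrw]
    calc |Real.cos (α * φ) * (b₂ - b₂') + (Real.cos (α * φ) - Real.cos (α₀ * φ)) * b₂'|
        ≤ |Real.cos (α * φ) * (b₂ - b₂')| + |(Real.cos (α * φ) - Real.cos (α₀ * φ)) * b₂'| :=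
          abs_add_le _ _
      _ = |Real.cos (α * φ)| * |b₂ - b₂'| + |Real.cos (α * φ) - Real.cos (α₀ * φ)| * |b₂'| := by
          rw [abs_mul, abs_mul]
      _ ≤ 1 * d + (d / 2) * 1 := by
          gcongr
          exact Real.abs_cos_le_one _
      _ = 3 * d / 2 := by ring
  have hsb : |Real.sin (α * φ) * b₁ - Real.sin (α₀ * φ) * b₁'| ≤ 3 * d / 2 := by
    have hrw : Real.sin (α * φ) * b₁ - Real.sin (α₀ * φ) * b₁'
        = Real.sin (α * φ) * (b₁ - b₁') + (Real.sin (α * φ) - Real.sin (α₀ * φ)) * b₁' := by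
      ring
    rw [hrw]
    calc |Real.sin (α * φ) * (b₁ - b₁') + (Real.sin (α * φ) - Real.sin (α₀ * φ)) * b₁'|
        ≤ |Real.sin (α * φ) * (b₁ - b₁')| + |(Real.sin (α * φ) - Real.sin (α₀ * φ)) * b₁'| :=
          abs_add_le _ _
      _ = |Real.sin (α * φ)| * |b₁ - b₁'| + |Real.sin (α * φ) - Real.sin (α₀ * φ)| * |b₁'| := by
          rw [abs_mul, abs_mul]
      _ ≤ 1 * d + (d / 2) * 1 := by
          gcongr
          exact Real.abs_sin_le_one _
      _ = 3 * d / 2 := by ring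
  -- |A - B| ≤ 3 r d
  have hE : |A - B| ≤ 3 * r * d := by
    have hrw : A - B = r * (Real.cos (α * φ) * b₂ - Real.cos (α₀ * φ) * b₂')
        - r * (Real.sin (α * φ) * b₁ - Real.sin (α₀ * φ) * b₁') := by
      rw [hA, hB]; ring
    rw [hrw]
    calc |r * (Real.cos (α * φ) * b₂ - Real.cos (α₀ * φ) * b₂')
          - r * (Real.sin (α * φ) * b₁ - Real.sin (α₀ * φ) * b₁')|
        ≤ |r * (Real.cos (α * φ) * b₂ - Real.cos (α₀ * φ) * b₂')|
          + |r * (Real.sin (α * φ) * b₁ - Real.sin (α₀ * φ) * b₁')| := abs_sub _ _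
      _ = |r| * |Real.cos (α * φ) * b₂ - Real.cos (α₀ * φ) * b₂'|
          + |r| * |Real.sin (α * φ) * b₁ - Real.sin (α₀ * φ) * b₁'| := by
          rw [abs_mul, abs_mul]
      _ ≤ r * (3 * d / 2) + r * (3 * d / 2) := by
          rw [abs_of_nonneg hr]; gcongr
      _ = 3 * r * d := by ring
  -- |A - B| ≤ 2 r
  have hu1 : |Real.cos (α * φ) * b₂ - Real.sin (α * φ) * b₁| ≤ 1 :=
    pot_aux_unit _ _ _ _ hb (Real.sin_sq_add_cos_sq _)
  have hu2 : |Real.cos (α₀ * φ) * b₂' - Real.sin (α₀ * φ) * b₁'| ≤ 1 :=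
    pot_aux_unit _ _ _ _ hb' (Real.sin_sq_add_cos_sq _)
  have hE2 : |A - B| ≤ 2 * r := by
    have hrw : A - B = r * (Real.cos (α * φ) * b₂ - Real.sin (α * φ) * b₁)
        - r * (Real.cos (α₀ * φ) * b₂' - Real.sin (α₀ * φ) * b₁') := by
      rw [hA, hB]; ring
    rw [hrw]
    calc _ ≤ |r * (Real.cos (α * φ) * b₂ - Real.sin (α * φ) * b₁)|
          + |r * (Real.cos (α₀ * φ) * b₂' - Real.sin (α₀ * φ) * b₁')| := abs_sub _ _
      _ = |r| * |Real.cos (α * φ) * b₂ - Real.sin (α * φ) * b₁|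
          + |r| * |Real.cos (α₀ * φ) * b₂' - Real.sin (α₀ * φ) * b₁'| := by
          rw [abs_mul, abs_mul]
      _ ≤ r * 1 + r * 1 := by rw [abs_of_nonneg hr]; gcongr
      _ = 2 * r := by ring
  -- final algebra
  set e := A - B with he
  clear_value e
  have hek : A = B + e := by rw [he]; ring
  clear_value A B
  have he3 : e ≤ 3 * r * d := le_trans (le_abs_self _) hE
  have he3' : -(3 * r * d) ≤ e := neg_le_of_abs_le hE
  have he2 : e ≤ 2 * r := le_trans (le_abs_self _) hE2
  have he2' : -(2 * r) ≤ e := neg_le_of_abs_le hE2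
  have habs : e ^ 2 = |e| * |e| := by rw [abs_mul_abs_self]; ring
  have hesq1 : e ^ 2 ≤ 9 * r ^ 2 * d ^ 2 := by
    have h9 := mul_le_mul hE hE (abs_nonneg _) (by positivity : (0:ℝ) ≤ 3 * r * d)
    rw [habs]; calc |e| * |e| ≤ 3 * r * d * (3 * r * d) := h9
      _ = 9 * r ^ 2 * d ^ 2 := by ring
  have hesq2 : e ^ 2 ≤ 6 * r ^ 2 * d := by
    have h6 := mul_le_mul hE2 hE (abs_nonneg _) (by positivity : (0:ℝ) ≤ 2 * r)
    rw [habs]; calc |e| * |e| ≤ 2 * r * (3 * r * d) := h6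
      _ = 6 * r ^ 2 * d := by ring
  rcases eq_or_lt_of_le hd with h0 | hpos
  · have he0 : e = 0 := by
      have h9 : |e| ≤ 0 := by rw [← h0] at hE; simpa using hE
      exact abs_eq_zero.mp (le_antisymm h9 (abs_nonneg _))
    rw [hek, he0, ← h0]
    norm_num
  · have t1 : (0:ℝ) ≤ (d * B - e) ^ 2 := sq_nonneg _
    have t2 : (0:ℝ) ≤ 9 * r ^ 2 * d ^ 2 - e ^ 2 := by linarith
    have t3 : (0:ℝ) ≤ d * (6 * r ^ 2 * d - e ^ 2) := mul_nonneg hd (by linarith)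
    have hmain : 0 ≤ d * ((1 + d) * B ^ 2 + 15 * r ^ 2 * d - (B + e) ^ 2) := by
      have hid : d * ((1 + d) * B ^ 2 + 15 * r ^ 2 * d - (B + e) ^ 2)
          = (d * B - e) ^ 2 + (9 * r ^ 2 * d ^ 2 - e ^ 2) + d * (6 * r ^ 2 * d - e ^ 2) := by
        ring
      rw [hid]; linarith
    have hX : (0:ℝ) ≤ (1 + d) * B ^ 2 + 15 * r ^ 2 * d - (B + e) ^ 2 :=
      le_of_mul_le_mul_left (by linarith : d * 0 ≤ d * ((1 + d) * B ^ 2 + 15 * r ^ 2 * d - (B + e) ^ 2)) hpos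
    rw [hek]
    linarith
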